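/- The real vector space h₂(ℍ) of hermitian 2×2 quaternionic matrices has real dimension 6, and the real quadratic form q on h₂(ℍ) defined by q(x) = re(x₁₁)·re(x₂₂) − re(x₁₂ · conj(x₁₂)) is equivalent (isometric as a real quadratic form) to the standard quadratic form of signature (1,5) on ℝ⁶, i.e., to (x₀, x₁, …, x₅) ↦ x₀² − x₁² − x₂² − x₃² − x₄² − x₅². -/

import Mathlib

open scoped Matrix Quaternion

instance : StarModule ℝ ℍ[ℝ] where
  star_smul r q := by ext <;> simp

/-- The quadratic form `q(x) = re(x₁₁)·re(x₂₂) − re(x₁₂ · conj(x₁₂))` on hermitian 2×2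
quaternionic matrices. -/
noncomputable def hermQuadForm (x : selfAdjoint (Matrix (Fin 2) (Fin 2) ℍ[ℝ])) : ℝ :=
  ((x : Matrix (Fin 2) (Fin 2) ℍ[ℝ]) 0 0).re * ((x : Matrix (Fin 2) (Fin 2) ℍ[ℝ]) 1 1).re -
    ((x : Matrix (Fin 2) (Fin 2) ℍ[ℝ]) 0 1 * star ((x : Matrix (Fin 2) (Fin 2) ℍ[ℝ]) 0 1)).re

/-!
A hermitian quaternionic matrix is `!![a, b; star b, d]` with `a d : ℝ` and `b : ℍ`, so
`h₂(ℍ) ≃ ℝ × ℝ × ℍ ≃ ℝ⁶`, and in these coordinates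
`q = a d - |b|² = ((a + d) / 2)² - ((a - d) / 2)² - |b|²`.
-/

namespace Matrix

variable {A : Type*} [AddCommGroup A] [StarAddMonoid A]

theorem IsHermitian.isSelfAdjoint_apply {n : Type*} {M : Matrix n n A} (hM : M.IsHermitian)
    (i : n) : IsSelfAdjoint (M i i) :=
  hM.apply i i

theorem isHermitian_of_fin_two {a d : A} (ha : IsSelfAdjoint a) (hd : IsSelfAdjoint d) (b : A) :
    (!![a, b; star b, d] : Matrix (Fin 2) (Fin 2) A).IsHermitian := by
  refine IsHermitian.ext fun i j => ?_
  fin_cases i <;> fin_cases j <;> simp [ha.star_eq, hd.star_eq]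

variable (R : Type*) [Semiring R] [Star R] [TrivialStar R] [Module R A] [StarModule R A]

@[simps]
def selfAdjointFinTwoEquiv :
    selfAdjoint (Matrix (Fin 2) (Fin 2) A) ≃ₗ[R] selfAdjoint A × selfAdjoint A × A where
  toFun M := (⟨M.1 0 0, IsHermitian.isSelfAdjoint_apply M.2 0⟩,
    ⟨M.1 1 1, IsHermitian.isSelfAdjoint_apply M.2 1⟩, M.1 0 1)
  invFun p := ⟨!![p.1, p.2.2; star p.2.2, p.2.1], isHermitian_of_fin_two p.1.2 p.2.1.2 p.2.2⟩
  map_add' _ _ := rfl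
  map_smul' _ _ := rfl
  left_inv M := by
    ext i j
    fin_cases i <;> fin_cases j <;> simp [IsHermitian.apply M.2]
  right_inv _ := rfl

end Matrix

namespace Quaternion

@[simps]
def selfAdjointEquiv : selfAdjoint ℍ[ℝ] ≃ₗ[ℝ] ℝ where
  toFun a := (a : ℍ[ℝ]).re
  invFun r := ⟨r, star_coe r⟩
  map_add' _ _ := rfl
  map_smul' _ _ := rfl
  left_inv a := Subtype.ext (star_eq_self.1 a.2).symm
  right_inv _ := rfl

end Quaternion

noncomputable section

def hermCoords : selfAdjoint (Matrix (Fin 2) (Fin 2) ℍ[ℝ]) ≃ₗ[ℝ] ℝ × ℝ × ℍ[ℝ] :=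
  (Matrix.selfAdjointFinTwoEquiv ℝ).trans <|
    Quaternion.selfAdjointEquiv.prodCongr <|
      Quaternion.selfAdjointEquiv.prodCongr (LinearEquiv.refl ℝ ℍ[ℝ])

theorem hermQuadForm_eq (x : selfAdjoint (Matrix (Fin 2) (Fin 2) ℍ[ℝ])) :
    hermQuadForm x =
      (hermCoords x).1 * (hermCoords x).2.1 - Quaternion.normSq (hermCoords x).2.2 := by
  simp [hermQuadForm, hermCoords, Quaternion.self_mul_star]

def lorentzCoords : (ℝ × ℝ × ℍ[ℝ]) ≃ₗ[ℝ] (Fin 6 → ℝ) where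
  toFun p := ![(p.1 + p.2.1) / 2, (p.1 - p.2.1) / 2, p.2.2.re, p.2.2.imI, p.2.2.imJ, p.2.2.imK]
  invFun v := (v 0 + v 1, v 0 - v 1, ⟨v 2, v 3, v 4, v 5⟩)
  map_add' p q := by
    ext i
    fin_cases i <;> simp <;> ring
  map_smul' r p := by
    ext i
    fin_cases i <;> simp <;> ring
  left_inv p := by
    ext <;> simp <;> ring
  right_inv v := by
    ext i
    fin_cases i <;> simp

theorem mul_sub_normSq_eq_lorentzCoords (p : ℝ × ℝ × ℍ[ℝ]) :
    p.1 * p.2.1 - Quaternion.normSq p.2.2 =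
      (lorentzCoords p 0) ^ 2 - ((lorentzCoords p 1) ^ 2 + (lorentzCoords p 2) ^ 2 +
        (lorentzCoords p 3) ^ 2 + (lorentzCoords p 4) ^ 2 + (lorentzCoords p 5) ^ 2) := by
  simp [lorentzCoords, Quaternion.normSq_def']
  ring

end

theorem herm2_quaternion_form_signature :
    Module.finrank ℝ (selfAdjoint (Matrix (Fin 2) (Fin 2) ℍ[ℝ])) = 6 ∧
    ∃ e : selfAdjoint (Matrix (Fin 2) (Fin 2) ℍ[ℝ]) ≃ₗ[ℝ] (Fin 6 → ℝ),
      ∀ x, hermQuadForm x =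
        (e x 0) ^ 2 - ((e x 1) ^ 2 + (e x 2) ^ 2 + (e x 3) ^ 2 + (e x 4) ^ 2 + (e x 5) ^ 2) := by
  let e := hermCoords.trans lorentzCoords
  refine ⟨e.finrank_eq.trans (Module.finrank_fin_fun ℝ), e, fun x => ?_⟩
  rw [hermQuadForm_eq]
  exact mul_sub_normSq_eq_lorentzCoords (hermCoords x)
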